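/- arXiv:1807.11896 — 2 statements merged into one kernel-verified Lean document; each statement's English description precedes it below -/
import Mathlib

section
/- Suppose κ is weakly inaccessible and λ ≥ κ. Then the nonstationary ideal NS_{κ,λ} on P_κλ is not strongly normal: there exists a stationary set A ⊆ P_κλ and a function F : A → P_κλ with F(x) ⊊ x and |F(x)| < |x ∩ κ| for all x ∈ A, such that for every value a the preimage F^{-1}({a}) is nonstationary (in fact not even cofinal in (P_κλ, ⊆)). -/
universe u

open Cardinal FirstOrder

noncomputable section

namespace TwoCardinalWC

/-! ### Basic two-cardinal combinatorics in the ZFC universe `ZFSet` -/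

/-- The cardinality of a ZF-set. -/
def cardZ (x : ZFSet.{u}) : Cardinal.{u + 1} := #x.toSet

/-- `x` is a von Neumann ordinal: a transitive set of transitive sets. -/
def IsOrd (x : ZFSet.{u}) : Prop := x.IsTransitive ∧ ∀ y ∈ x.toSet, ZFSet.IsTransitive y

/-- `x` is a (von Neumann) cardinal: an ordinal not equinumerous to any of its members. -/
def IsCardZ (x : ZFSet.{u}) : Prop := IsOrd x ∧ ∀ y ∈ x.toSet, cardZ y < cardZ x

/-- `x` is an inaccessible cardinal. -/
def InaccZ (x : ZFSet.{u}) : Prop := IsCardZ x ∧ (cardZ x).IsInaccessible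

/-- `x` is a weakly inaccessible cardinal: an uncountable regular limit cardinal. -/
def WeaklyInaccZ (x : ZFSet.{u}) : Prop :=
  IsCardZ x ∧ (cardZ x).IsRegular ∧ ℵ₀ < cardZ x ∧
    ∀ d : Cardinal.{u + 1}, d < cardZ x → Order.succ d < cardZ x

/-- `κZ` is a Mahlo cardinal: inaccessible, and every club in `κZ` contains a regular cardinal. -/
def MahloZ (κZ : ZFSet.{u}) : Prop :=
  InaccZ κZ ∧ ∀ C : Set ZFSet.{u}, C ⊆ κZ.toSet →
    (∀ a ∈ κZ.toSet, ∃ b ∈ C, a ∈ b ∨ a = b) →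
    (∀ b ∈ κZ.toSet, b ≠ ∅ → (∀ a ∈ b.toSet, ∃ c ∈ C, (a ∈ c ∨ a = c) ∧ c ∈ b) → b ∈ C) →
    ∃ b ∈ C, IsCardZ b ∧ (cardZ b).IsRegular

/-- `P_μ(s)`: the collection of subsets of the ZF-set `s` of cardinality `< μ`. -/
def Plt (μ : Cardinal.{u + 1}) (s : ZFSet.{u}) : Set ZFSet.{u} := {y | y ⊆ s ∧ cardZ y < μ}

/-- `P_κ λ` as a collection of ZF-sets. -/
def PKL (κZ lamZ : ZFSet.{u}) : Set ZFSet.{u} := Plt (cardZ κZ) lamZ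

/-- `P_κ λ` as a single ZF-set. -/
def PKLz (κZ lamZ : ZFSet.{u}) : ZFSet.{u} :=
  ZFSet.sep (fun y => cardZ y < cardZ κZ) (ZFSet.powerset lamZ)

/-- `κ_x = |x ∩ κ|`. -/
def kap (κZ x : ZFSet.{u}) : Cardinal.{u + 1} := cardZ (x ∩ κZ)

/-- `P_{κ_x} x`: subsets of `x` of cardinality `< κ_x`. -/
def Psub (κZ x : ZFSet.{u}) : Set ZFSet.{u} := Plt (kap κZ x) x

/-- The weak club `C_f = {x ∈ P_κλ : f[P_{κ_x}x] ⊆ P_{κ_x}x}`. -/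
def weakClub (κZ lamZ : ZFSet.{u}) (f : ZFSet.{u} → ZFSet.{u}) : Set ZFSet.{u} :=
  {x | x ∈ PKL κZ lamZ ∧ ∀ y ∈ Psub κZ x, f y ∈ Psub κZ x}

/-- `S` is strongly stationary in `P_κλ`: it meets every weak club. -/
def stronglyStat (κZ lamZ : ZFSet.{u}) (S : Set ZFSet.{u}) : Prop :=
  ∀ f : ZFSet.{u} → ZFSet.{u}, (S ∩ weakClub κZ lamZ f).Nonempty

/-- `C` is `1`-closed: whenever `κ_x` is inaccessible and `C ∩ P_{κ_x}x` is
strongly stationary in `P_{κ_x}x`, then `x ∈ C`. -/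
def oneClosed (κZ lamZ : ZFSet.{u}) (C : Set ZFSet.{u}) : Prop :=
  ∀ x ∈ PKL κZ lamZ, (kap κZ x).IsInaccessible →
    stronglyStat (x ∩ κZ) x (C ∩ Psub κZ x) → x ∈ C

/-- `C ⊆ P_κλ` is `1`-club: strongly stationary and `1`-closed. -/
def oneClub (κZ lamZ : ZFSet.{u}) (C : Set ZFSet.{u}) : Prop :=
  C ⊆ PKL κZ lamZ ∧ stronglyStat κZ lamZ C ∧ oneClosed κZ lamZ C

/-- The image `f''x` of a ZF-set under an arbitrary (class) function. -/
def imgZ (f : ZFSet.{u} → ZFSet.{u}) (x : ZFSet.{u}) : ZFSet.{u} :=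
  @ZFSet.image f (Classical.allZFSetDefinable _) x

/-! ### The language of set theory and elementarity -/

/-- Relation symbols: one binary relation (membership). -/
def memRel : ℕ → Type (u + 1)
  | 2 => PUnit
  | _ => PEmpty

/-- The language of set theory: a single binary relation `∈`. -/
def Lmem : FirstOrder.Language.{u + 1, u + 1} := ⟨fun _ => PEmpty, memRel⟩

/-- The `∈`-structure on a collection of ZF-sets. -/
def memStruct (W : Set ZFSet.{u}) : Lmem.{u}.Structure ↥W where
  funMap := fun e _ => e.elim
  RelMap := fun {n} r v =>
    match n, r, v with
    | 0, r, _ => r.elim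
    | 1, r, _ => r.elim
    | 2, _, v => ((v 0 : ZFSet.{u}) ∈ (v 1 : ZFSet.{u}))
    | (_ + 3), r, _ => r.elim

/-- Realization of an `∈`-formula in `(W, ∈)`. -/
def RealizeMem (W : Set ZFSet.{u}) {n : ℕ} (φ : Lmem.{u}.BoundedFormula Empty n)
    (w : Fin n → ↥W) : Prop :=
  letI := memStruct W
  φ.Realize (fun e => e.elim) w

/-- `j` is an elementary embedding from `(Ms, ∈)` into `(Ns, ∈)`. -/
def IsElemEmb (Ms Ns : Set ZFSet.{u}) (j : ZFSet.{u} → ZFSet.{u}) : Prop :=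
  ∃ h : ∀ a ∈ Ms, j a ∈ Ns,
    ∀ (n : ℕ) (φ : Lmem.{u}.BoundedFormula Empty n) (w : Fin n → ↥Ms),
      RealizeMem Ms φ w ↔ RealizeMem Ns φ (fun i => ⟨j ((w i : ZFSet.{u})), h _ (w i).2⟩)

/-- A predicate on ZF-sets is definable over `Mz` (with parameters from `Mz`). -/
def DefinableOver (Mz : ZFSet.{u}) (p : ZFSet.{u} → Prop) : Prop :=
  ∃ (n : ℕ) (φ : Lmem.{u}.BoundedFormula Empty (n + 1)) (v : Fin n → ↥Mz.toSet),
    ∀ (a : ZFSet.{u}) (ha : a ∈ Mz.toSet), p a ↔ RealizeMem Mz.toSet φ (Fin.snoc v ⟨a, ha⟩)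

/-- A class function is definable over `Mz` (with parameters from `Mz`). -/
def DefinableFunOver (Mz : ZFSet.{u}) (f : ZFSet.{u} → ZFSet.{u}) : Prop :=
  (∀ a, a ∈ Mz → f a ∈ Mz) ∧
  ∃ (n : ℕ) (φ : Lmem.{u}.BoundedFormula Empty (n + 2)) (v : Fin n → ↥Mz.toSet),
    ∀ (a : ZFSet.{u}) (ha : a ∈ Mz.toSet) (b : ZFSet.{u}) (hb : b ∈ Mz.toSet),
      f a = b ↔ RealizeMem Mz.toSet φ (Fin.snoc (Fin.snoc v ⟨a, ha⟩) ⟨b, hb⟩)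

/-- `Mz` is a transitive model of `ZFC⁻`: transitive and closed under the
`ZFC⁻` operations (pairing, union, infinity, definable separation and replacement). -/
def SatZFCminus (Mz : ZFSet.{u}) : Prop :=
  Mz.IsTransitive ∧ ZFSet.omega ∈ Mz ∧
  (∀ a, a ∈ Mz → ∀ b, b ∈ Mz → ({a, b} : ZFSet.{u}) ∈ Mz) ∧
  (∀ a, a ∈ Mz → ZFSet.sUnion a ∈ Mz) ∧
  (∀ p : ZFSet.{u} → Prop, DefinableOver Mz p → ∀ a, a ∈ Mz → ZFSet.sep p a ∈ Mz) ∧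
  (∀ f : ZFSet.{u} → ZFSet.{u}, DefinableFunOver Mz f → ∀ a, a ∈ Mz → imgZ f a ∈ Mz)

/-- `W ⊆ P_κλ` is weakly compact: for every `A ⊆ λ` there are a transitive model
`M ⊨ ZFC⁻` with `λ, A, W ∈ M`, closed under `<κ`-sized subsets, a transitive `N` and an
elementary embedding `j : M → N` with critical point `κ`, `j(κ) > λ` and `j''λ ∈ j(W)`. -/
def IsWC (κZ lamZ W : ZFSet.{u}) : Prop :=
  W ⊆ PKLz κZ lamZ ∧
  ∀ A : ZFSet.{u}, A ⊆ lamZ →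
    ∃ (Mz Nz : ZFSet.{u}) (j : ZFSet.{u} → ZFSet.{u}),
      SatZFCminus Mz ∧ Nz.IsTransitive ∧
      lamZ ∈ Mz ∧ A ∈ Mz ∧ W ∈ Mz ∧
      (∀ s : ZFSet.{u}, s.toSet ⊆ Mz.toSet → cardZ s < cardZ κZ → s ∈ Mz) ∧
      IsElemEmb Mz.toSet Nz.toSet j ∧
      (∀ a, a ∈ κZ → j a = a) ∧ j κZ ≠ κZ ∧
      lamZ ∈ j κZ ∧ imgZ j lamZ ∈ j W

/-! ### The two-cardinal cumulative hierarchy -/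

/-- Baumgartner's hierarchy `V_α(δ, A)`:
`V_0 = A`, `V_{α+1} = P_δ(V_α) ∪ V_α`, unions at limits. -/
def Vh (δ : Cardinal.{u + 1}) (A : Set ZFSet.{u}) (α : Ordinal.{u + 1}) : Set ZFSet.{u} :=
  Ordinal.limitRecOn α A (fun _ ih => {y | y.toSet ⊆ ih ∧ cardZ y < δ} ∪ ih)
    (fun o _ ih => {s | ∃ β, ∃ h : β < o, s ∈ ih β h})

/-- The usual von Neumann hierarchy, as a collection of ZF-sets. -/
def VN (α : Ordinal.{u + 1}) : Set ZFSet.{u} :=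
  Ordinal.limitRecOn α (∅ : Set ZFSet.{u}) (fun _ ih => {y | y.toSet ⊆ ih})
    (fun o _ ih => {s | ∃ β, ∃ h : β < o, s ∈ ih β h})

/-! ### The language with `∈` and a unary predicate `R` -/

/-- Relation symbols: a unary predicate and a binary relation. -/
def lrRel : ℕ → Type (u + 1)
  | 1 => PUnit
  | 2 => PUnit
  | _ => PEmpty

/-- The language with membership and one unary predicate. -/
def LR : FirstOrder.Language.{u + 1, u + 1} := ⟨fun _ => PEmpty, lrRel⟩

/-- The structure `(W, ∈, R)`. -/
def rStruct (W R : Set ZFSet.{u}) : LR.{u}.Structure ↥W where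
  funMap := fun e _ => e.elim
  RelMap := fun {n} r v =>
    match n, r, v with
    | 0, r, _ => r.elim
    | 1, _, v => ((v 0 : ZFSet.{u}) ∈ R)
    | 2, _, v => ((v 0 : ZFSet.{u}) ∈ (v 1 : ZFSet.{u}))
    | (_ + 3), r, _ => r.elim

/-- Realization of an `LR`-formula in `(W, ∈, R)`. -/
def RealizeR (W R : Set ZFSet.{u}) {n : ℕ} (φ : LR.{u}.BoundedFormula Empty n)
    (w : Fin n → ↥W) : Prop :=
  letI := rStruct W R
  φ.Realize (fun e => e.elim) w

/-- Satisfaction of a first-order sentence in `(W, ∈, R)`. -/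
def SatR (W R : Set ZFSet.{u}) (φ : LR.{u}.Sentence) : Prop :=
  RealizeR W R φ (fun i => i.elim0)

/-- `(W₁, ∈, R ∩ W₁)` is an elementary substructure of `(W₂, ∈, R)`. -/
def ElemSubR (W₁ W₂ R : Set ZFSet.{u}) : Prop :=
  ∃ h : W₁ ⊆ W₂,
    ∀ (n : ℕ) (φ : LR.{u}.BoundedFormula Empty n) (w : Fin n → ↥W₁),
      RealizeR W₁ (R ∩ W₁) φ w ↔ RealizeR W₂ R φ (fun i => ⟨(w i : ZFSet.{u}), h (w i).2⟩)


/-- `C` is a club subset of `P_κλ`: cofinal in `(P_κλ, ⊆)` and closed under unions of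
`⊆`-increasing chains of length less than `κ`. -/
def chainClub (κZ lamZ : ZFSet.{u}) (C : Set ZFSet.{u}) : Prop :=
  C ⊆ PKL κZ lamZ ∧ (∀ x ∈ PKL κZ lamZ, ∃ y ∈ C, x ⊆ y) ∧
  ∀ η : Ordinal.{u + 1}, η ≠ 0 → η < (cardZ κZ).ord →
    ∀ g : Ordinal.{u + 1} → ZFSet.{u},
      (∀ β, β < η → g β ∈ C) →
      (∀ β₁ β₂, β₁ < β₂ → β₂ < η → g β₁ ⊆ g β₂) →
      ZFSet.sep (fun t => ∃ β, ∃ _ : β < η, t ∈ g β) lamZ ∈ C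

/-!
Let `A` (`cofOmegaSet`) be the set of `x ∈ P_κλ` for which `x ∩ κ` is an uncountable
ordinal of cofinality `ω`, and let `F x` (`cofinalRange κ x`) be the range of an
`ω`-sequence cofinal in `x ∩ κ`. Then `F x` is countable, and it determines `x ∩ κ` as the
union of its members. So all `x` in a fiber of `F` share their trace on `κ` and omit one
fixed `t < κ`: the fiber misses the club of sets containing `t`.

`A` is stationary: given a club, build an `ω`-chain in it that alternately passes ordinals
below `κ` (there is room since `κ` is regular), starting above an uncountable ordinal below
`κ` (one exists since `κ` is a limit cardinal). The union of the chain lies in the club, and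
its trace on `κ` is the supremum of these ordinals, so it lies in `A`.
-/

open scoped ZFSet

lemma cardZ_mono {x y : ZFSet.{u}} (h : x ⊆ y) : cardZ x ≤ cardZ y :=
  Cardinal.mk_le_mk_of_subset h

lemma cardZ_union_lt {μ : Cardinal.{u + 1}} (hμ : ℵ₀ ≤ μ) {x y : ZFSet.{u}}
    (hx : cardZ x < μ) (hy : cardZ y < μ) : cardZ (x ∪ y) < μ := by
  exact (Cardinal.mk_le_mk_of_subset (ZFSet.coe_union x y).le |>.trans
    (Cardinal.mk_union_le _ _)).trans_lt (Cardinal.add_lt_of_lt hμ hx hy)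

lemma cardZ_insert_lt {μ : Cardinal.{u + 1}} (hμ : ℵ₀ ≤ μ) (t : ZFSet.{u}) {x : ZFSet.{u}}
    (hx : cardZ x < μ) : cardZ (insert t x) < μ := by
  exact (Cardinal.mk_le_mk_of_subset (ZFSet.coe_insert t x).le |>.trans
    Cardinal.mk_insert_le).trans_lt (Cardinal.add_lt_of_lt hμ hx (one_lt_aleph0.trans_le hμ))

lemma cardZ_singleton (t : ZFSet.{u}) : cardZ {t} = 1 := by
  change #((({t} : ZFSet.{u})) : Set ZFSet.{u}) = 1
  rw [ZFSet.coe_singleton, Cardinal.mk_singleton]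

lemma cardZ_sUnion_lt {μ : Cardinal.{u + 1}} (hμ : μ.IsRegular) {s : ZFSet.{u}}
    (hs : cardZ s < μ) (hmem : ∀ d ∈ s, cardZ d < μ) : cardZ (⋃₀ s : ZFSet.{u}) < μ := by
  have hsub : ((⋃₀ s : ZFSet.{u}) : Set ZFSet.{u}) ⊆
      ⋃ d : (s : Set ZFSet.{u}), (d.1 : Set ZFSet.{u}) := by
    intro t ht
    obtain ⟨d, hd, htd⟩ := ZFSet.mem_sUnion.1 ht
    exact Set.mem_iUnion.2 ⟨⟨d, hd⟩, htd⟩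
  refine (Cardinal.mk_le_mk_of_subset hsub).trans_lt ?_
  exact (Cardinal.card_iUnion_lt_iff_forall_of_isRegular hμ hs).2 fun d => hmem d.1 d.2

lemma cardZ_toZFSet (o : Ordinal.{u}) : cardZ o.toZFSet = lift.{u + 1} o.card := by
  rw [cardZ, ← Ordinal.card_toZFSet]
  exact ZFSet.cardinalMk_coe_sort

lemma IsOrd.isOrdinal {x : ZFSet.{u}} (h : IsOrd x) : x.IsOrdinal :=
  ZFSet.isOrdinal_iff_forall_mem_isTransitive.2 h

lemma _root_.ZFSet.IsOrdinal.exists_mem_aleph0_lt_cardZ {κZ : ZFSet.{u}} (hκ : κZ.IsOrdinal)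
    (h : Order.succ ℵ₀ < cardZ κZ) : ∃ w ∈ κZ, ℵ₀ < cardZ w := by
  rw [← hκ.toZFSet_rank_eq] at h ⊢
  rw [cardZ_toZFSet] at h
  have hlt : Order.succ ℵ₀ < κZ.rank.card := by
    rwa [← Cardinal.lift_aleph0.{u + 1, u}, ← Cardinal.lift_succ, Cardinal.lift_lt] at h
  refine ⟨(Order.succ ℵ₀ : Cardinal.{u}).ord.toZFSet,
    Ordinal.toZFSet_mem_toZFSet_iff.2 (lt_of_not_ge fun hle => ?_), ?_⟩
  · exact (Cardinal.card_ord (Order.succ ℵ₀) ▸ Ordinal.card_le_card hle).not_gt hlt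
  · rw [cardZ_toZFSet, Cardinal.card_ord, Cardinal.lift_succ, Cardinal.lift_aleph0]
    exact Order.lt_succ _

lemma IsCardZ.exists_mem_superset {κZ y : ZFSet.{u}} (hκ : IsCardZ κZ)
    (hreg : (cardZ κZ).IsRegular) (hy : y ⊆ κZ) (hcard : cardZ y < cardZ κZ) :
    ∃ s ∈ κZ, y ⊆ s := by
  have hκo := hκ.1.isOrdinal
  have hsκ : y ∪ ⋃₀ y ⊆ κZ := by
    intro z hz
    rcases ZFSet.mem_union.1 hz with hz | hz
    · exact hy hz
    · obtain ⟨d, hd, hzd⟩ := ZFSet.mem_sUnion.1 hz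
      exact hκo.mem_trans hzd (hy hd)
  have htrans : (y ∪ ⋃₀ y).IsTransitive := by
    intro z hz b hb
    refine ZFSet.mem_union.2 (Or.inr (ZFSet.mem_sUnion.2 ?_))
    rcases ZFSet.mem_union.1 hz with hz | hz
    · exact ⟨z, hz, hb⟩
    · obtain ⟨d, hd, hzd⟩ := ZFSet.mem_sUnion.1 hz
      exact ⟨d, hd, (hκo.mem (hy hd)).mem_trans hb hzd⟩
  have hs : (y ∪ ⋃₀ y).IsOrdinal := ZFSet.isOrdinal_iff_forall_mem_isTransitive.2
    ⟨htrans, fun z hz => (hκo.mem (hsκ hz)).isTransitive⟩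
  have hscard : cardZ (y ∪ ⋃₀ y) < cardZ κZ := cardZ_union_lt hreg.aleph0_le hcard
    (cardZ_sUnion_lt hreg hcard fun d hd => hκ.2 d (hy hd))
  refine ⟨_, ((hs.subset_iff_eq_or_mem hκo).1 hsκ).resolve_left fun h => (h ▸ hscard).false,
    fun z hz => ZFSet.mem_union.2 (Or.inl hz)⟩

lemma empty_mem_PKL {κZ : ZFSet.{u}} (hκ : 0 < cardZ κZ) (lamZ : ZFSet.{u}) :
    ∅ ∈ PKL κZ lamZ := by
  refine ⟨ZFSet.empty_subset lamZ, ?_⟩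
  change #((∅ : ZFSet.{u}) : Set ZFSet.{u}) < _
  rwa [ZFSet.coe_empty, Cardinal.mk_eq_zero]

lemma singleton_mem_PKL {κZ lamZ t : ZFSet.{u}} (hκ : 1 < cardZ κZ) (ht : t ∈ lamZ) :
    {t} ∈ PKL κZ lamZ := by
  refine ⟨fun z hz => ZFSet.mem_singleton.1 hz ▸ ht, ?_⟩
  rwa [cardZ_singleton]

lemma exists_mem_notMem_of_mem_PKL {κZ lamZ z : ZFSet.{u}} (hz : z ∈ PKL κZ lamZ) :
    ∃ t ∈ κZ, t ∉ z := by
  by_contra! h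
  exact ((cardZ_mono h).trans_lt hz.2).false

lemma sep_iUnion_mem_PKL {κZ lamZ : ZFSet.{u}} (hreg : (cardZ κZ).IsRegular)
    {η : Ordinal.{u + 1}} (hη : η < (cardZ κZ).ord) {g : Ordinal.{u + 1} → ZFSet.{u}}
    (hg : ∀ β < η, g β ∈ PKL κZ lamZ) :
    ZFSet.sep (fun t => ∃ β, ∃ _ : β < η, t ∈ g β) lamZ ∈ PKL κZ lamZ := by
  refine ⟨fun z hz => (ZFSet.mem_sep.1 hz).1, ?_⟩
  let e := (Ordinal.ToType.mk (o := η)).symm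
  have hsub : ((ZFSet.sep (fun t => ∃ β, ∃ _ : β < η, t ∈ g β) lamZ) : Set ZFSet.{u}) ⊆
      ⋃ i : η.ToType, (g (e i).1 : Set ZFSet.{u}) := by
    intro t ht
    obtain ⟨-, β, hβ, htβ⟩ := ZFSet.mem_sep.1 ht
    refine Set.mem_iUnion.2 ⟨e.symm ⟨β, hβ⟩, ?_⟩
    rwa [OrderIso.apply_symm_apply]
  refine (Cardinal.mk_le_mk_of_subset hsub).trans_lt ?_
  refine (Cardinal.card_iUnion_lt_iff_forall_of_isRegular hreg ?_).2 fun i => (hg _ (e i).2).2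
  rwa [Cardinal.mk_toType, ← Cardinal.lt_ord]

lemma chainClub_setOf_mem {κZ lamZ t : ZFSet.{u}} (hreg : (cardZ κZ).IsRegular)
    (ht : t ∈ lamZ) : chainClub κZ lamZ {x | x ∈ PKL κZ lamZ ∧ t ∈ x} := by
  refine ⟨fun x hx => hx.1, fun x hx => ?_, fun η hη0 hη g hg _ => ?_⟩
  · refine ⟨insert t x, ⟨⟨fun z hz => ?_, cardZ_insert_lt hreg.aleph0_le t hx.2⟩,
      ZFSet.mem_insert t x⟩, fun z hz => ZFSet.mem_insert_of_mem t hz⟩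
    rcases ZFSet.mem_insert_iff.1 hz with rfl | hz
    exacts [ht, hx.1 hz]
  · have h0 : (0 : Ordinal) < η := pos_iff_ne_zero.2 hη0
    exact ⟨sep_iUnion_mem_PKL hreg hη fun β hβ => (hg β hβ).1,
      ZFSet.mem_sep.2 ⟨ht, 0, h0, (hg 0 h0).2⟩⟩

lemma chainClub.exists_iUnion_mem {κZ lamZ : ZFSet.{u}} {C : Set ZFSet.{u}}
    (hC : chainClub κZ lamZ C) (hκ : ℵ₀ < cardZ κZ) {X : ℕ → ZFSet.{u}} (hXC : ∀ n, X n ∈ C)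
    (hX : Monotone X) : ∃ Y ∈ C, ∀ t, t ∈ Y ↔ ∃ n, t ∈ X n := by
  let g : Ordinal.{u + 1} → ZFSet.{u} := fun β => X (Cardinal.toNat β.card)
  have hg : ∀ n : ℕ, g n = X n := fun n => by simp [g]
  have hω : Ordinal.omega0 < (cardZ κZ).ord := by
    rwa [← Cardinal.ord_aleph0, Cardinal.ord_lt_ord]
  refine ⟨_, hC.2.2 Ordinal.omega0 Ordinal.omega0_ne_zero hω g ?_ ?_, fun t => ?_⟩
  · intro β hβ
    obtain ⟨n, rfl⟩ := Ordinal.lt_omega0.1 hβ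
    exact hg n ▸ hXC n
  · intro β₁ β₂ h12 h2
    obtain ⟨n, rfl⟩ := Ordinal.lt_omega0.1 h2
    obtain ⟨m, rfl⟩ := Ordinal.lt_omega0.1 (h12.trans h2)
    rw [hg, hg]
    exact hX (by exact_mod_cast h12.le)
  · rw [ZFSet.mem_sep]
    constructor
    · rintro ⟨-, β, hβ, ht⟩
      obtain ⟨n, rfl⟩ := Ordinal.lt_omega0.1 hβ
      exact ⟨n, hg n ▸ ht⟩
    · rintro ⟨n, ht⟩
      exact ⟨(hC.1 (hXC n)).1 ht, n, Ordinal.natCast_lt_omega0 n, (hg n).symm ▸ ht⟩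

def IsCofinalSeq (o : ZFSet.{u}) (f : ℕ → ZFSet.{u}) : Prop :=
  (∀ n, f n ∈ o) ∧ ∀ b ∈ o, ∃ n, b ∈ f n

def cofOmegaSet (κZ lamZ : ZFSet.{u}) : Set ZFSet.{u} :=
  {x | x ∈ PKL κZ lamZ ∧ (x ∩ κZ).IsTransitive ∧ ℵ₀ < kap κZ x ∧
    ∃ f, IsCofinalSeq (x ∩ κZ) f}

def cofinalRange (κZ x : ZFSet.{u}) : ZFSet.{u} :=
  open Classical in
  if h : ∃ f, IsCofinalSeq (x ∩ κZ) f then ZFSet.sep (· ∈ Set.range h.choose) x else ∅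

section cofinalRange

variable {κZ lamZ x : ZFSet.{u}}

lemma cofinalRange_subset : cofinalRange κZ x ⊆ x := by
  unfold cofinalRange
  split
  · exact fun z hz => (ZFSet.mem_sep.1 hz).1
  · exact ZFSet.empty_subset x

lemma cardZ_cofinalRange_le : cardZ (cofinalRange κZ x) ≤ ℵ₀ := by
  refine Cardinal.le_aleph0_iff_set_countable.2 ?_
  unfold cofinalRange
  split
  case isTrue h =>
    exact (Set.countable_range h.choose).mono fun t ht => (ZFSet.mem_sep.1 ht).2
  case isFalse =>
    change ((∅ : ZFSet.{u}) : Set ZFSet.{u}).Countable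
    rw [ZFSet.coe_empty]
    exact Set.countable_empty

lemma mem_inter_iff_exists_mem_cofinalRange (hx : x ∈ cofOmegaSet κZ lamZ) (b : ZFSet.{u}) :
    b ∈ x ∩ κZ ↔ ∃ c ∈ cofinalRange κZ x, b ∈ c := by
  obtain ⟨-, htr, -, hf⟩ := hx
  obtain ⟨hfmem, hfcof⟩ := hf.choose_spec
  rw [cofinalRange, dif_pos hf]
  constructor
  · intro hb
    obtain ⟨n, hn⟩ := hfcof b hb
    exact ⟨_, ZFSet.mem_sep.2 ⟨(ZFSet.mem_inter.1 (hfmem n)).1, n, rfl⟩, hn⟩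
  · rintro ⟨c, hc, hbc⟩
    obtain ⟨-, n, rfl⟩ := ZFSet.mem_sep.1 hc
    exact htr _ (hfmem n) hbc

lemma inter_eq_of_cofinalRange_eq {y : ZFSet.{u}} (hx : x ∈ cofOmegaSet κZ lamZ)
    (hy : y ∈ cofOmegaSet κZ lamZ) (h : cofinalRange κZ x = cofinalRange κZ y) :
    x ∩ κZ = y ∩ κZ := by
  ext b
  rw [mem_inter_iff_exists_mem_cofinalRange hx, mem_inter_iff_exists_mem_cofinalRange hy, h]

lemma cofinalRange_regressive (hx : x ∈ cofOmegaSet κZ lamZ) :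
    cofinalRange κZ x ⊆ x ∧ cofinalRange κZ x ≠ x ∧ cardZ (cofinalRange κZ x) < kap κZ x := by
  have hlt : cardZ (cofinalRange κZ x) < kap κZ x := cardZ_cofinalRange_le.trans_lt hx.2.2.1
  refine ⟨cofinalRange_subset, fun h => ?_, hlt⟩
  have hle : kap κZ x ≤ cardZ x := cardZ_mono fun z hz => (ZFSet.mem_inter.1 hz).1
  rw [h] at hlt
  exact (hlt.trans_le hle).false

lemma exists_notMem_of_cofinalRange_eq (hκ : 0 < cardZ κZ) (a : ZFSet.{u}) :
    ∃ t ∈ κZ, ∀ x ∈ cofOmegaSet κZ lamZ, cofinalRange κZ x = a → t ∉ x := by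
  by_cases hfib : ∃ x₀ ∈ cofOmegaSet κZ lamZ, cofinalRange κZ x₀ = a
  · obtain ⟨x₀, hx₀, rfl⟩ := hfib
    obtain ⟨t, htκ, htx₀⟩ := exists_mem_notMem_of_mem_PKL hx₀.1
    refine ⟨t, htκ, fun x hx hxa htx => htx₀ ?_⟩
    have ht : t ∈ x₀ ∩ κZ :=
      inter_eq_of_cofinalRange_eq hx hx₀ hxa ▸ ZFSet.mem_inter.2 ⟨htx, htκ⟩
    exact (ZFSet.mem_inter.1 ht).1
  · obtain ⟨t, htκ, -⟩ := exists_mem_notMem_of_mem_PKL (empty_mem_PKL hκ lamZ)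
    exact ⟨t, htκ, fun x hx hxa _ => hfib ⟨x, hx, hxa⟩⟩

end cofinalRange

lemma mem_cofOmegaSet_of_eq_iUnion {κZ lamZ x : ZFSet.{u}} {S : ℕ → ZFSet.{u}}
    (hx : x ∈ PKL κZ lamZ) (hS : ∀ n, (S n).IsTransitive) (hSx : ∀ n, S n ∈ x ∩ κZ)
    (hxS : ∀ t, t ∈ x ∩ κZ ↔ ∃ n, t ∈ S n) (hS₀ : ℵ₀ < cardZ (S 0)) :
    x ∈ cofOmegaSet κZ lamZ := by
  refine ⟨hx, fun t ht b hb => ?_, hS₀.trans_le (cardZ_mono fun t ht => (hxS t).2 ⟨0, ht⟩),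
    S, hSx, fun b hb => (hxS b).1 hb⟩
  obtain ⟨n, htn⟩ := (hxS t).1 ht
  exact (hxS b).2 ⟨n, hS n t htn hb⟩

lemma chainClub.exists_extend_past_ordinal {κZ lamZ w x : ZFSet.{u}} {C : Set ZFSet.{u}}
    (hC : chainClub κZ lamZ C) (hκ : IsCardZ κZ) (hreg : (cardZ κZ).IsRegular)
    (hκlam : κZ ⊆ lamZ) (hw : w ∈ κZ) (hx : x ∈ C) :
    ∃ y ∈ C, ∃ s ∈ κZ, x ∪ s ⊆ y ∧ (x ∩ κZ) ∪ w ⊆ s ∧ s ∈ y := by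
  have hxκ : cardZ (x ∩ κZ) < cardZ κZ :=
    (cardZ_mono fun z hz => (ZFSet.mem_inter.1 hz).1).trans_lt (hC.1 hx).2
  obtain ⟨s, hsκ, hs⟩ := hκ.exists_mem_superset hreg (y := (x ∩ κZ) ∪ w)
    (fun z hz => (ZFSet.mem_union.1 hz).elim (fun hz => (ZFSet.mem_inter.1 hz).2)
      fun hz => hκ.1.1 w hw hz)
    (cardZ_union_lt hreg.aleph0_le hxκ (hκ.2 w hw))
  have hP : insert s (x ∪ s) ∈ PKL κZ lamZ := by
    refine ⟨fun z hz => ?_, cardZ_insert_lt hreg.aleph0_le s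
      (cardZ_union_lt hreg.aleph0_le (hC.1 hx).2 (hκ.2 s hsκ))⟩
    rcases ZFSet.mem_insert_iff.1 hz with rfl | hz
    · exact hκlam hsκ
    · exact (ZFSet.mem_union.1 hz).elim (fun hz => (hC.1 hx).1 hz)
        fun hz => hκlam (hκ.1.1 s hsκ hz)
  obtain ⟨y, hyC, hy⟩ := hC.2.1 _ hP
  exact ⟨y, hyC, s, hsκ, fun z hz => hy (ZFSet.mem_insert_of_mem _ hz), hs,
    hy (ZFSet.mem_insert _ _)⟩

lemma chainClub.exists_seq_interleave {κZ lamZ w : ZFSet.{u}} {C : Set ZFSet.{u}}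
    (hC : chainClub κZ lamZ C) (hκ : IsCardZ κZ) (hreg : (cardZ κZ).IsRegular)
    (hκlam : κZ ⊆ lamZ) (hw : w ∈ κZ) :
    ∃ X S : ℕ → ZFSet.{u}, (∀ n, X n ∈ C) ∧ Monotone X ∧ (∀ n, S n ∈ κZ) ∧ w ⊆ S 0 ∧
      ∀ n, X n ∩ κZ ⊆ S n ∧ S n ∈ X (n + 1) ∧ S n ⊆ X (n + 1) := by
  have hstep : ∀ x : C, ∃ y : C, ∃ s ∈ κZ,
      (x : ZFSet.{u}) ∪ s ⊆ y ∧ ((x : ZFSet.{u}) ∩ κZ) ∪ w ⊆ s ∧ s ∈ (y : ZFSet.{u}) :=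
    fun x =>
      let ⟨y, hyC, hy⟩ := hC.exists_extend_past_ordinal hκ hreg hκlam hw x.2
      ⟨⟨y, hyC⟩, hy⟩
  choose next s hsκ hsub hs hsy using hstep
  obtain ⟨x₀, hx₀C, -⟩ := hC.2.1 ∅ (empty_mem_PKL hreg.pos lamZ)
  let X : ℕ → C := fun n => next^[n] ⟨x₀, hx₀C⟩
  have hX : ∀ n, X (n + 1) = next (X n) := fun n => Function.iterate_succ_apply' next n _
  refine ⟨fun n => X n, fun n => s (X n), fun n => (X n).2,
    monotone_nat_of_le_succ fun n z hz => ?_, fun n => hsκ _,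
    fun z hz => hs _ (ZFSet.mem_union.2 (Or.inr hz)),
    fun n => ⟨fun z hz => ?_, ?_, fun z hz => ?_⟩⟩
  · rw [hX n]
    exact hsub _ (ZFSet.mem_union.2 (Or.inl hz))
  · exact hs _ (ZFSet.mem_union.2 (Or.inl hz))
  · dsimp only
    rw [hX n]
    exact hsy _
  · dsimp only
    rw [hX n]
    exact hsub _ (ZFSet.mem_union.2 (Or.inr hz))

theorem cofOmegaSet_inter_nonempty {κZ lamZ : ZFSet.{u}} {C : Set ZFSet.{u}}
    (hκ : WeaklyInaccZ κZ) (hκlam : κZ ⊆ lamZ) (hC : chainClub κZ lamZ C) :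
    (cofOmegaSet κZ lamZ ∩ C).Nonempty := by
  obtain ⟨hκcard, hreg, hω, hlim⟩ := hκ
  have hκo := hκcard.1.isOrdinal
  obtain ⟨w, hwκ, hw⟩ := hκo.exists_mem_aleph0_lt_cardZ (hlim ℵ₀ hω)
  obtain ⟨X, S, hXC, hX, hSκ, hwS, hXS⟩ := hC.exists_seq_interleave hκcard hreg hκlam hwκ
  obtain ⟨Y, hYC, hY⟩ := hC.exists_iUnion_mem hω hXC hX
  have hYS : ∀ t, t ∈ Y ∩ κZ ↔ ∃ n, t ∈ S n := by
    intro t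
    rw [ZFSet.mem_inter, hY]
    constructor
    · rintro ⟨⟨n, ht⟩, htκ⟩
      exact ⟨n, (hXS n).1 (ZFSet.mem_inter.2 ⟨ht, htκ⟩)⟩
    · rintro ⟨n, ht⟩
      exact ⟨⟨n + 1, (hXS n).2.2 ht⟩, hκo.mem_trans ht (hSκ n)⟩
  refine ⟨Y, mem_cofOmegaSet_of_eq_iUnion (hC.1 hYC) (fun n => (hκo.mem (hSκ n)).isTransitive)
    (fun n => (hYS _).2 ⟨n + 1, ?_⟩) hYS (hw.trans_le (cardZ_mono hwS)), hYC⟩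
  exact (hXS (n + 1)).1 (ZFSet.mem_inter.2 ⟨(hXS n).2.1, hSκ n⟩)

theorem NS_not_strongly_normal_general (κZ lamZ : ZFSet.{u})
    (hκ : WeaklyInaccZ κZ) (hκlam : κZ ⊆ lamZ) :
    ∃ A : Set ZFSet.{u}, A ⊆ PKL κZ lamZ ∧
      (∀ C : Set ZFSet.{u}, chainClub κZ lamZ C → (A ∩ C).Nonempty) ∧
      ∃ F : ZFSet.{u} → ZFSet.{u},
        (∀ x ∈ A, F x ⊆ x ∧ F x ≠ x ∧ cardZ (F x) < kap κZ x) ∧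
        ∀ a : ZFSet.{u},
          (∃ C : Set ZFSet.{u}, chainClub κZ lamZ C ∧
            ∀ x ∈ A, F x = a → x ∉ C) ∧
          ¬ (∀ z ∈ PKL κZ lamZ, ∃ x ∈ A, F x = a ∧ z ⊆ x) := by
  have hreg := hκ.2.1
  refine ⟨cofOmegaSet κZ lamZ, fun x hx => hx.1,
    fun C hC => cofOmegaSet_inter_nonempty hκ hκlam hC,
    cofinalRange κZ, fun x hx => cofinalRange_regressive hx, fun a => ?_⟩
  obtain ⟨t, htκ, hfib⟩ := exists_notMem_of_cofinalRange_eq (lamZ := lamZ) hreg.pos a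
  refine ⟨⟨_, chainClub_setOf_mem hreg (hκlam htκ), fun x hx hxa hxC => hfib x hx hxa hxC.2⟩,
    fun hcof => ?_⟩
  obtain ⟨x, hx, hxa, htx⟩ :=
    hcof {t} (singleton_mem_PKL (one_lt_aleph0.trans_le hreg.aleph0_le) (hκlam htκ))
  exact hfib x hx hxa (htx (ZFSet.mem_singleton.2 rfl))

/-- If `κ` is weakly inaccessible and `λ ≥ κ`, then `NS_{κ,λ}` is not
strongly normal: there are a stationary `A ⊆ P_κλ` and `F : A → P_κλ` with
`F(x) ⊊ x` and `|F(x)| < |x ∩ κ|` on `A`, all of whose fibers are nonstationary and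
not even cofinal in `(P_κλ, ⊆)`. -/
theorem NS_not_strongly_normal (κZ lamZ : ZFSet.{u})
    (hκord : IsOrd κZ) (hκ : WeaklyInaccZ κZ) (hlamord : IsOrd lamZ) (hκlam : κZ ⊆ lamZ) :
    ∃ A : Set ZFSet.{u}, A ⊆ PKL κZ lamZ ∧
      (∀ C : Set ZFSet.{u}, chainClub κZ lamZ C → (A ∩ C).Nonempty) ∧
      ∃ F : ZFSet.{u} → ZFSet.{u},
        (∀ x ∈ A, F x ⊆ x ∧ F x ≠ x ∧ cardZ (F x) < kap κZ x) ∧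
        ∀ a : ZFSet.{u},
          (∃ C : Set ZFSet.{u}, chainClub κZ lamZ C ∧
            ∀ x ∈ A, F x = a → x ∉ C) ∧
          ¬ (∀ z ∈ PKL κZ lamZ, ∃ x ∈ A, F x = a ∧ z ⊆ x) :=
  NS_not_strongly_normal_general κZ lamZ hκ hκlam

end TwoCardinalWC
end
end

section
/- If δ is an inaccessible cardinal and A is a set of ordinals, then V_δ(δ, A) ∩ V_δ = V_δ, where V_δ is the δ-th level of the usual cumulative hierarchy. More generally, for every α < δ, V_α(δ, A) ∩ V_α = V_α. -/
universe u

open Cardinal FirstOrder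

noncomputable section

namespace TwoCardinalWC

/-! By induction on `α ≤ δ`, `V_α ⊆ V_α(δ, A)`: a member of `V_{α+1}` is a subset of
`V_α ⊆ V_α(δ, A)` of size at most `|V_α|`, and `|V_α| < δ` for `α < δ` because `δ` is a regular
strong limit. -/

universe v

theorem Vh_succ {δ : Cardinal.{u + 1}} {A : Set ZFSet.{u}} (α : Ordinal.{u + 1}) :
    Vh δ A (α + 1) = {y | y.toSet ⊆ Vh δ A α ∧ cardZ y < δ} ∪ Vh δ A α :=
  Ordinal.limitRecOn_add_one ..

theorem Vh_limit {δ : Cardinal.{u + 1}} {A : Set ZFSet.{u}} {α : Ordinal.{u + 1}}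
    (h : Order.IsSuccLimit α) : Vh δ A α = {s | ∃ β, ∃ _ : β < α, s ∈ Vh δ A β} :=
  Ordinal.limitRecOn_limit _ _ _ _ h

theorem VN_zero : VN.{u} 0 = ∅ := Ordinal.limitRecOn_zero ..

theorem VN_succ (α : Ordinal.{u + 1}) : VN.{u} (α + 1) = {y | y.toSet ⊆ VN α} :=
  Ordinal.limitRecOn_add_one ..

theorem VN_limit {α : Ordinal.{u + 1}} (h : Order.IsSuccLimit α) :
    VN.{u} α = {s | ∃ β, ∃ _ : β < α, s ∈ VN β} :=
  Ordinal.limitRecOn_limit _ _ _ _ h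

theorem mk_setOf_toSet_subset_le (S : Set ZFSet.{u}) :
    #{y : ZFSet.{u} | y.toSet ⊆ S} ≤ 2 ^ #S := by
  rw [← Cardinal.mk_powerset]
  refine Cardinal.mk_le_of_injective (f := fun y => ⟨y.1.toSet, y.2⟩) ?_
  intro y z hyz
  exact Subtype.ext (SetLike.coe_injective (congrArg Subtype.val hyz))

theorem mk_setOf_exists_lt_lt {c : Cardinal.{v}} (hc : c.IsRegular) {X : Type v}
    {α : Ordinal.{v}} (hα : α < c.ord) (f : Ordinal.{v} → Set X) (hf : ∀ β < α, #(f β) < c) :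
    #{x | ∃ β, ∃ _ : β < α, x ∈ f β} < c := by
  have hunion : {x | ∃ β, ∃ _ : β < α, x ∈ f β} =
      ⋃ i : α.ToType, f (Ordinal.ToType.mk.symm i) := by
    ext x
    simp only [Set.mem_iUnion, Set.mem_ofPred_eq]
    constructor
    · rintro ⟨β, hβ, hx⟩
      exact ⟨Ordinal.ToType.mk ⟨β, hβ⟩, by simpa using hx⟩
    · rintro ⟨i, hx⟩
      exact ⟨_, (Ordinal.ToType.mk.symm i).2, hx⟩
  have hcard : #α.ToType < c := by
    rw [Cardinal.mk_toType]
    exact Cardinal.lt_ord.1 hα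
  rw [hunion, Cardinal.card_iUnion_lt_iff_forall_of_isRegular hc hcard]
  exact fun i => hf _ (Ordinal.ToType.mk.symm i).2

theorem mk_VN_lt {δ : Cardinal.{u + 1}} (hreg : δ.IsRegular) (hlim : δ.IsStrongLimit) :
    ∀ α : Ordinal.{u + 1}, α < δ.ord → #(VN.{u} α) < δ := by
  intro α
  induction α using Ordinal.limitRecOn with
  | zero =>
    intro _
    rw [VN_zero, Cardinal.mk_eq_zero]
    exact pos_iff_ne_zero.2 hlim.ne_zero
  | add_one α ih =>
    intro hα
    rw [VN_succ]
    exact (mk_setOf_toSet_subset_le _).trans_lt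
      (hlim.isStrongPrelimit (ih ((Order.lt_succ α).trans hα)))
  | limit α hα ih =>
    intro hαδ
    rw [VN_limit hα]
    exact mk_setOf_exists_lt_lt hreg hαδ _ fun β hβ => ih β hβ (hβ.trans hαδ)

theorem VN_subset_Vh {δ : Cardinal.{u + 1}} {A : Set ZFSet.{u}} :
    ∀ α : Ordinal.{u + 1}, (∀ β < α, #(VN.{u} β) < δ) → VN.{u} α ⊆ Vh δ A α := by
  intro α
  induction α using Ordinal.limitRecOn with
  | zero => intro _; simp [VN_zero]
  | add_one α ih =>
    intro hsmall y hy
    rw [VN_succ] at hy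
    rw [Vh_succ]
    refine Or.inl ⟨hy.trans (ih fun β hβ => hsmall β (hβ.trans (Order.lt_succ α))), ?_⟩
    exact (Cardinal.mk_le_mk_of_subset hy).trans_lt (hsmall α (Order.lt_succ α))
  | limit α hα ih =>
    intro hsmall
    rw [VN_limit hα, Vh_limit hα]
    rintro s ⟨β, hβ, hs⟩
    exact ⟨β, hβ, ih β hβ (fun γ hγ => hsmall γ (hγ.trans hβ)) hs⟩

theorem hierarchy_inter_vonNeumann_general (δZ A : ZFSet.{u}) (hδ : InaccZ δZ) :
    (∀ α : Ordinal.{u + 1}, α < (cardZ δZ).ord →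
      Vh (cardZ δZ) A.toSet α ∩ VN α = VN α) ∧
    Vh (cardZ δZ) A.toSet ((cardZ δZ).ord) ∩ VN ((cardZ δZ).ord) = VN ((cardZ δZ).ord) := by
  have hsub : ∀ α ≤ (cardZ δZ).ord, VN α ⊆ Vh (cardZ δZ) A.toSet α := fun α hα =>
    VN_subset_Vh α fun β hβ =>
      mk_VN_lt hδ.2.isRegular hδ.2.isStrongLimit β (hβ.trans_le hα)
  exact ⟨fun α hα => Set.inter_eq_right.2 (hsub α hα.le), Set.inter_eq_right.2 (hsub _ le_rfl)⟩

/-- If `δ` is inaccessible and `A` is a set of ordinals, then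
`V_α(δ, A) ∩ V_α = V_α` for every `α < δ`, and `V_δ(δ, A) ∩ V_δ = V_δ`. -/
theorem hierarchy_inter_vonNeumann (δZ A : ZFSet.{u}) (hδ : InaccZ δZ)
    (hA : ∀ t ∈ A.toSet, IsOrd t) :
    (∀ α : Ordinal.{u + 1}, α < (cardZ δZ).ord →
      Vh (cardZ δZ) A.toSet α ∩ VN α = VN α) ∧
    Vh (cardZ δZ) A.toSet ((cardZ δZ).ord) ∩ VN ((cardZ δZ).ord) = VN ((cardZ δZ).ord) :=
  hierarchy_inter_vonNeumann_general δZ A hδ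

end TwoCardinalWC
end
end
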